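/- arXiv:1503.01983 — 2 statements merged into one kernel-verified Lean document; each statement's English description precedes it below -/
import Mathlib

section
/- Fix an integer k ≥ 1 and α ∈ (−1/k, −1/(k+1)), and set p = p(n) = n^α (real power). Then for every n ≥ 1 and every j ≥ 1: (a) if either j = 2k−1 and α ∈ [−1/(k+1/2), −1/(k+1)), or 1 ≤ j ≤ 2k−2, then Var_{μ_{n,p}}[f_{n,j}] ≤ 2^{j+1} · n^{2j} · p^{2·C(j+1,2) − 1}; (b) if either j = 2k−1 and α ∈ (−1/k, −1/(k+1/2)], or j ≥ 2k, then Var_{μ_{n,p}}[f_{n,j}] ≤ 2^{j+1} · n^{j+1} · p^{C(j+1,2)}. -/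
/-!
Write `f_{n,j} = ∑_A 1_A` over the `(j+1)`-subsets `A` of `[n]`. The indicators `1_A`, `1_B` are
independent unless `|A ∩ B| = i ≥ 2`, and then their covariance is at most
`p ^ (2 C(j+1,2) - C(i,2))`. At most `C(j+1,i) n^(j+1-i)` sets `B` meet a given `A` in `i`
vertices, so `Var f_{n,j} ≤ 2^(j+1) n^(j+1) max_{2 ≤ i ≤ j+1} n^(j+1-i) p^(2 C(j+1,2) - C(i,2))`.
For `p = n^α` the exponent of `n` in the `i`-th term is a convex quadratic in `i` when `α < 0`,
so the maximum is at `i = 2` or `i = j + 1`; the two exponents differ by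
`(j - 1) (1 + α (j + 2) / 2)`. The hypotheses of (a) give `α (j + 2) ≥ -2`, where `i = 2` wins,
and those of (b) give `α (j + 2) ≤ -2`, where `i = j + 1` (that is, `A = B`) wins.
-/

open Finset MeasureTheory Filter Real

noncomputable section

open scoped Classical

/-- The edge set `E_n`: unordered pairs of distinct elements of `[n]`. -/
abbrev Edge (n : ℕ) := {e : Sym2 (Fin n) // ¬ e.IsDiag}

/-- An edge configuration on `[n]`. -/
abbrev Config (n : ℕ) := Edge n → Bool

/-- Bernoulli(p) weight of a state. -/
def bern (p : ℝ) (b : Bool) : ℝ := if b then p else 1 - p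

/-- Weight of a configuration under the static Erdős–Rényi measure `μ_{n,p}`. -/
def staticWeight (n : ℕ) (p : ℝ) (ω : Config n) : ℝ := ∏ e : Edge n, bern p (ω e)

/-- Expectation under the static Erdős–Rényi measure `μ_{n,p}`. -/
def staticExp (n : ℕ) (p : ℝ) (f : Config n → ℝ) : ℝ :=
  ∑ ω : Config n, staticWeight n p ω * f ω

/-- Variance under the static Erdős–Rényi measure `μ_{n,p}`. -/
def staticVar (n : ℕ) (p : ℝ) (f : Config n → ℝ) : ℝ :=
  staticExp n p (fun ω => (f ω - staticExp n p f) ^ 2)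

/-- `A` is a clique of the graph `G(ω)`: every pair of distinct elements of `A`
is an edge of `G(ω)`. -/
def IsCliqueOf {n : ℕ} (A : Finset (Fin n)) (ω : Config n) : Prop :=
  ∀ e : Edge n, e.1 ∈ A.sym2 → ω e = true

/-- The clique count `f_{n,j}(ω)`: the number of `(j+1)`-element subsets of `[n]`
all of whose pairs are edges of `G(ω)`. -/
def cliqueCount (n j : ℕ) (ω : Config n) : ℕ :=
  ((Finset.powersetCard (j + 1) (Finset.univ : Finset (Fin n))).filter
    (fun A => IsCliqueOf A ω)).card

/-- Real-valued clique count. -/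
def cliqueCountR (n j : ℕ) (ω : Config n) : ℝ := (cliqueCount n j ω : ℝ)

/-- The Euler characteristic `χ_n(ω) = Σ_{j=0}^{n-1} (-1)^j f_{n,j}(ω)`. -/
def eulerChar (n : ℕ) (ω : Config n) : ℝ :=
  ∑ j ∈ Finset.range n, (-1 : ℝ) ^ j * cliqueCountR n j ω

/-- Transition probability of the stationary on/off Markov chain with invariant
law Bernoulli(p) over a time increment `s`. -/
def transP (lam p s : ℝ) (b b' : Bool) : ℝ :=
  if b then (if b' then p + (1 - p) * Real.exp (-lam * s)
             else (1 - p) * (1 - Real.exp (-lam * s)))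
  else (if b' then p * (1 - Real.exp (-lam * s))
        else (1 - p) + p * Real.exp (-lam * s))

/-- Weight of a trajectory of the stationary on/off Markov chain observed at the
times `t 0 ≤ t 1 ≤ …`. -/
def pathWeight (lam p : ℝ) {m : ℕ} (t : Fin m → ℝ) (b : Fin m → Bool) : ℝ :=
  ∏ i : Fin m,
    if (i : ℕ) = 0 then bern p (b i)
    else transP lam p (t i - t ⟨(i : ℕ) - 1, lt_of_le_of_lt (Nat.sub_le _ _) i.isLt⟩)
      (b ⟨(i : ℕ) - 1, lt_of_le_of_lt (Nat.sub_le _ _) i.isLt⟩) (b i)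

/-- Weight of an `m`-tuple of edge configurations under the `m`-time dynamic
Erdős–Rényi measure `μ_{n,p}^{(t 0, …, t (m-1))}`. -/
def dynWeight (lam p : ℝ) (n : ℕ) {m : ℕ} (t : Fin m → ℝ) (ω : Fin m → Config n) : ℝ :=
  ∏ e : Edge n, pathWeight lam p t (fun i => ω i e)

/-- Expectation under the `m`-time dynamic Erdős–Rényi measure. -/
def dynExp (lam p : ℝ) (n : ℕ) {m : ℕ} (t : Fin m → ℝ) (F : (Fin m → Config n) → ℝ) : ℝ :=
  ∑ ω : Fin m → Config n, dynWeight lam p n t ω * F ω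

/-- The normalized clique count `f̄_{n,k}` (under the measure `μ_{n,p}`). -/
def fbar (n k : ℕ) (p : ℝ) (ω : Config n) : ℝ :=
  (cliqueCountR n k ω - staticExp n p (cliqueCountR n k)) /
    Real.sqrt (staticVar n p (cliqueCountR n k))

/-- The normalized Euler characteristic `χ̄_n` (under the measure `μ_{n,p}`). -/
def chibar (n : ℕ) (p : ℝ) (ω : Config n) : ℝ :=
  (eulerChar n ω - staticExp n p (eulerChar n)) /
    Real.sqrt (staticVar n p (eulerChar n))

/-- The clique indicator `1_A(ω)` as a real number. -/
def cliqueInd {n : ℕ} (A : Finset (Fin n)) (ω : Config n) : ℝ :=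
  if IsCliqueOf A ω then 1 else 0

/-- A quadruple of subsets has an independent set if one of them shares at most
one vertex with each of the others. -/
def HasIndepSet {n : ℕ} (A : Fin 4 → Finset (Fin n)) : Prop :=
  ∃ q : Fin 4, ∀ r : Fin 4, r ≠ q → ((A q) ∩ (A r)).card ≤ 1

/-- The quantity `g(h; Ā)` built from clique indicators at three times. -/
def gQuad {n : ℕ} (A : Fin 4 → Finset (Fin n)) (ω : Fin 3 → Config n) : ℝ :=
  (cliqueInd (A 0) (ω 2) - cliqueInd (A 0) (ω 1)) *
  (cliqueInd (A 1) (ω 2) - cliqueInd (A 1) (ω 1)) *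
  (cliqueInd (A 2) (ω 1) - cliqueInd (A 2) (ω 0)) *
  (cliqueInd (A 3) (ω 1) - cliqueInd (A 3) (ω 0))

/-- `ver(Ā)`: inclusion–exclusion count of vertices. -/
def verA {n : ℕ} (A : Fin 4 → Finset (Fin n)) : ℤ :=
  (∑ q : Fin 4, ((A q).card : ℤ))
  - (∑ q : Fin 4, ∑ r : Fin 4, if q < r then (((A q) ∩ (A r)).card : ℤ) else 0)
  + (∑ q : Fin 4, ∑ r : Fin 4, ∑ s : Fin 4,
      if q < r ∧ r < s then (((A q) ∩ (A r) ∩ (A s)).card : ℤ) else 0)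
  - ((A 0 ∩ A 1 ∩ A 2 ∩ A 3).card : ℤ)

/-- `pair(Ā)`: inclusion–exclusion count of potential edges. -/
def pairA {n : ℕ} (A : Fin 4 → Finset (Fin n)) : ℤ :=
  (∑ q : Fin 4, (Nat.choose (A q).card 2 : ℤ))
  - (∑ q : Fin 4, ∑ r : Fin 4, if q < r then (Nat.choose ((A q) ∩ (A r)).card 2 : ℤ) else 0)
  + (∑ q : Fin 4, ∑ r : Fin 4, ∑ s : Fin 4,
      if q < r ∧ r < s then (Nat.choose ((A q) ∩ (A r) ∩ (A s)).card 2 : ℤ) else 0)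
  - (Nat.choose (A 0 ∩ A 1 ∩ A 2 ∩ A 3).card 2 : ℤ)

def edgesOf {n : ℕ} (A : Finset (Fin n)) : Finset (Edge n) :=
  {e | e.1 ∈ A.sym2}

lemma card_edgesOf {n : ℕ} (A : Finset (Fin n)) : #(edgesOf A) = (#A).choose 2 := by
  rw [← Sym2.card_image_offDiag, ← Sym2.filter_image_mk_not_isDiag, ← Finset.sym2_eq_image,
    ← Finset.card_map (Function.Embedding.subtype _)]
  congr 1
  ext e
  simp [edgesOf]

lemma edgesOf_inter {n : ℕ} (A B : Finset (Fin n)) :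
    edgesOf (A ∩ B) = edgesOf A ∩ edgesOf B := by
  ext ⟨e, he⟩
  induction e using Sym2.ind
  simp [edgesOf]
  tauto

lemma card_filter_card_inter_eq_le {α : Type*} [Fintype α] [DecidableEq α] (A : Finset α)
    (m i : ℕ) :
    #{B ∈ powersetCard m univ | #(A ∩ B) = i} ≤
      (#A).choose i * (Fintype.card α).choose (m - i) := by
  rw [← card_powersetCard, ← card_univ, ← card_powersetCard, ← card_product]
  refine card_le_card_of_injOn (fun B => (A ∩ B, B \ A)) ?_ ?_
  · intro B hB
    obtain ⟨hBm, hABi⟩ : #B = m ∧ #(A ∩ B) = i := by simpa using hB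
    have := card_inter_add_card_sdiff B A
    rw [inter_comm] at this
    simp only [coe_product, Set.mem_prod, mem_coe, mem_powersetCard]
    exact ⟨⟨inter_subset_left, hABi⟩, subset_univ _, by omega⟩
  · intro B₁ _ B₂ _ h
    simp only [Prod.mk.injEq] at h
    rw [← sdiff_union_inter B₁ A, ← sdiff_union_inter B₂ A, inter_comm B₁, inter_comm B₂, h.1, h.2]

section StaticMeasure

variable {n : ℕ} {p : ℝ}

lemma staticExp_sum {ι : Type*} (s : Finset ι) (g : ι → Config n → ℝ) :
    staticExp n p (fun ω => ∑ i ∈ s, g i ω) = ∑ i ∈ s, staticExp n p (g i) := by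
  simp only [staticExp, mul_sum]
  exact sum_comm

lemma staticExp_indicator_forall (S : Finset (Edge n)) :
    staticExp n p (fun ω => if ∀ e ∈ S, ω e = true then 1 else 0) = p ^ #S := by
  have hfactor : ∀ ω : Config n, staticWeight n p ω * (if ∀ e ∈ S, ω e = true then 1 else 0)
      = ∏ e, (bern p (ω e) * if e ∈ S then (if ω e then 1 else 0) else 1) := by
    intro ω
    rw [prod_mul_distrib, prod_ite_mem, univ_inter, prod_ite_zero, prod_const_one, staticWeight]
    congr
  rw [staticExp, sum_congr rfl fun ω _ => hfactor ω,
    ← Fintype.prod_sum fun e b => bern p b * if e ∈ S then (if b then 1 else 0) else 1]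
  have hfactor_sum : ∀ e, (∑ b, bern p b * if e ∈ S then (if b then 1 else 0) else 1)
      = if e ∈ S then p else 1 := by
    intro e
    split_ifs <;> simp [bern]
  rw [prod_congr rfl fun e _ => hfactor_sum e, prod_ite_mem, univ_inter, prod_const]

lemma staticExp_one : staticExp n p (fun _ => 1) = 1 := by
  simpa using staticExp_indicator_forall (n := n) (p := p) ∅

lemma staticVar_eq_sub (f : Config n → ℝ) :
    staticVar n p f = staticExp n p (fun ω => f ω ^ 2) - staticExp n p f ^ 2 := by
  have hmass : ∑ ω : Config n, staticWeight n p ω = 1 := by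
    simpa [staticExp] using staticExp_one (n := n) (p := p)
  set μ := ∑ ω, staticWeight n p ω * f ω
  have hcross : ∑ ω, staticWeight n p ω * (2 * f ω * μ) = 2 * μ * μ := by
    simp_rw [show ∀ ω, staticWeight n p ω * (2 * f ω * μ) = 2 * μ * (staticWeight n p ω * f ω)
      from fun ω => by ring, ← mul_sum]
    rfl
  have hconst : ∑ ω, staticWeight n p ω * μ ^ 2 = μ ^ 2 := by rw [← sum_mul, hmass, one_mul]
  simp only [staticVar, staticExp, sub_sq, mul_add, mul_sub, sum_add_distrib, sum_sub_distrib]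
  rw [hcross, hconst]
  ring

lemma staticVar_sum {ι : Type*} (s : Finset ι) (g : ι → Config n → ℝ) :
    staticVar n p (fun ω => ∑ i ∈ s, g i ω) = ∑ i ∈ s, ∑ i' ∈ s,
      (staticExp n p (fun ω => g i ω * g i' ω) - staticExp n p (g i) * staticExp n p (g i')) := by
  simp only [staticVar_eq_sub, sq, sum_mul_sum, staticExp_sum, sum_sub_distrib]

lemma cliqueInd_eq_ite (A : Finset (Fin n)) (ω : Config n) :
    cliqueInd A ω = if ∀ e ∈ edgesOf A, ω e = true then 1 else 0 := by
  simp [cliqueInd, IsCliqueOf, edgesOf]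

lemma staticExp_cliqueInd_mul (A B : Finset (Fin n)) :
    staticExp n p (fun ω => cliqueInd A ω * cliqueInd B ω) = p ^ #(edgesOf A ∪ edgesOf B) := by
  rw [← staticExp_indicator_forall]
  congr 1
  ext ω
  simp only [cliqueInd_eq_ite, forall_mem_union, ite_zero_mul_ite_zero, one_mul]

lemma staticExp_cliqueInd (A : Finset (Fin n)) :
    staticExp n p (cliqueInd A) = p ^ #(edgesOf A) := by
  rw [← staticExp_indicator_forall]
  exact congrArg _ (funext (cliqueInd_eq_ite A))

lemma cliqueCountR_eq_sum (j : ℕ) (ω : Config n) :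
    cliqueCountR n j ω = ∑ A ∈ powersetCard (j + 1) univ, cliqueInd A ω := by
  simp only [cliqueCountR, cliqueCount, card_filter, Nat.cast_sum, Nat.cast_ite, Nat.cast_one,
    Nat.cast_zero, cliqueInd]

lemma staticVar_cliqueCountR_eq_sum (j : ℕ) :
    staticVar n p (cliqueCountR n j) = ∑ A ∈ powersetCard (j + 1) (univ : Finset (Fin n)),
      ∑ B ∈ powersetCard (j + 1) univ,
        (p ^ #(edgesOf A ∪ edgesOf B) - p ^ #(edgesOf A) * p ^ #(edgesOf B)) := by
  simp only [funext (cliqueCountR_eq_sum j), staticVar_sum, staticExp_cliqueInd_mul,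
    staticExp_cliqueInd]

end StaticMeasure

lemma card_edgesOf_union_add_choose {n m : ℕ} {A B : Finset (Fin n)} (hA : #A = m) (hB : #B = m) :
    #(edgesOf A ∪ edgesOf B) + (#(A ∩ B)).choose 2 = 2 * m.choose 2 := by
  rw [← card_edgesOf, edgesOf_inter, card_union_add_card_inter, card_edgesOf, card_edgesOf, hA, hB,
    two_mul]

lemma cov_cliqueInd_le {n m : ℕ} {p : ℝ} (hp : 0 ≤ p) {A B : Finset (Fin n)} (hA : #A = m)
    (hB : #B = m) :
    p ^ #(edgesOf A ∪ edgesOf B) - p ^ #(edgesOf A) * p ^ #(edgesOf B) ≤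
      if 2 ≤ #(A ∩ B) then p ^ (2 * m.choose 2 - (#(A ∩ B)).choose 2) else 0 := by
  have hunion := card_edgesOf_union_add_choose hA hB
  rw [card_edgesOf, card_edgesOf, hA, hB, ← pow_add, ← two_mul]
  split_ifs with h
  · rw [show #(edgesOf A ∪ edgesOf B) = 2 * m.choose 2 - (#(A ∩ B)).choose 2 by omega]
    linarith [pow_nonneg hp (2 * m.choose 2)]
  · rw [Nat.choose_eq_zero_of_lt (by omega), add_zero] at hunion
    rw [hunion, sub_self]

lemma sum_powersetCard_card_inter_le {α : Type*} [Fintype α] [DecidableEq α] (A : Finset α)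
    (m : ℕ) (f : ℕ → ℝ) (hf : ∀ i, 0 ≤ f i) :
    ∑ B ∈ powersetCard m univ, f #(A ∩ B) ≤
      ∑ i ∈ range (m + 1), ((#A).choose i * (Fintype.card α).choose (m - i) : ℕ) * f i := by
  have hmaps : ∀ B ∈ powersetCard m univ, #(A ∩ B) ∈ range (m + 1) := fun B hB => by
    rw [mem_range, Nat.lt_succ_iff, ← (mem_powersetCard_univ.mp hB)]
    exact card_le_card inter_subset_right
  rw [← sum_fiberwise_of_maps_to hmaps]
  refine sum_le_sum fun i _ => ?_
  rw [sum_congr rfl fun B hB => by rw [(mem_filter.mp hB).2], sum_const, nsmul_eq_mul]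
  exact mul_le_mul_of_nonneg_right (by exact_mod_cast card_filter_card_inter_eq_le A m i) (hf i)

/-- For `x = n`, `C(j+1, i) * x ^ (j + 1 - i)` bounds the number of `(j+1)`-subsets of `[n]`
meeting a fixed one in `i` vertices, and `p ^ (2 * C(j+1, 2) - C(i, 2))` is the probability that both are
cliques. -/
def overlapTerm (x p : ℝ) (j i : ℕ) : ℝ :=
  x ^ (j + 1 - i) * p ^ (2 * (j + 1).choose 2 - i.choose 2)

lemma staticVar_cliqueCountR_le {n j : ℕ} {p T : ℝ} (hp : 0 ≤ p) (hT0 : 0 ≤ T)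
    (hT : ∀ i, 2 ≤ i → i ≤ j + 1 → overlapTerm n p j i ≤ T) :
    staticVar n p (cliqueCountR n j) ≤ 2 ^ (j + 1) * n ^ (j + 1) * T := by
  set P := powersetCard (j + 1) (univ : Finset (Fin n))
  set w : ℕ → ℝ := fun i => if 2 ≤ i then p ^ (2 * (j + 1).choose 2 - i.choose 2) else 0
  have hw : ∀ i, 0 ≤ w i := fun i => by positivity
  have hwT : ∀ i ≤ j + 1, (n.choose (j + 1 - i) : ℝ) * w i ≤ T := fun i hi => by
    by_cases h : 2 ≤ i
    · simp only [w, if_pos h]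
      refine le_trans ?_ (hT i h hi)
      exact mul_le_mul_of_nonneg_right (by exact_mod_cast n.choose_le_pow _) (pow_nonneg hp _)
    · simpa [w, h] using hT0
  have hcard : (#P : ℝ) ≤ n ^ (j + 1) := by
    simpa [P] using (Nat.cast_le (α := ℝ)).mpr (n.choose_le_pow (j + 1))
  calc staticVar n p (cliqueCountR n j)
      ≤ ∑ A ∈ P, ∑ B ∈ P, w #(A ∩ B) := by
        rw [staticVar_cliqueCountR_eq_sum]
        exact sum_le_sum fun A hA => sum_le_sum fun B hB =>
          cov_cliqueInd_le hp (mem_powersetCard_univ.mp hA) (mem_powersetCard_univ.mp hB)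
    _ ≤ ∑ A ∈ P, ∑ i ∈ range (j + 2), ((j + 1).choose i : ℝ) * T := by
        refine sum_le_sum fun A hA => (sum_powersetCard_card_inter_le A _ w hw).trans ?_
        refine sum_le_sum fun i hi => ?_
        rw [mem_powersetCard_univ.mp hA, Fintype.card_fin, Nat.cast_mul, mul_assoc]
        exact mul_le_mul_of_nonneg_left (hwT i (by simpa [Nat.lt_succ_iff] using hi))
          (Nat.cast_nonneg _)
    _ = #P * (2 ^ (j + 1) * T) := by
        rw [← sum_mul, ← Nat.cast_sum, Nat.sum_range_choose, sum_const, nsmul_eq_mul]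
        push_cast
        ring
    _ ≤ 2 ^ (j + 1) * n ^ (j + 1) * T := by
        have := mul_le_mul_of_nonneg_right hcard (by positivity : (0 : ℝ) ≤ 2 ^ (j + 1) * T)
        linarith

lemma pow_mul_rpow_pow_le {x α : ℝ} (hx : 1 ≤ x) {a b c d : ℕ}
    (h : (a : ℝ) + α * c ≤ b + α * d) : x ^ a * (x ^ α) ^ c ≤ x ^ b * (x ^ α) ^ d := by
  have hx0 : 0 < x := zero_lt_one.trans_le hx
  have key : ∀ a c : ℕ, x ^ a * (x ^ α) ^ c = x ^ ((a : ℝ) + α * c) := fun a c => by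
    rw [rpow_add hx0, rpow_natCast, ← rpow_natCast (x ^ α), ← rpow_mul hx0.le]
  rw [key, key]
  exact rpow_le_rpow_of_exponent_le hx h

lemma overlapTerm_rpow_le {x α : ℝ} (hx : 1 ≤ x) {j i i' : ℕ} (hi : i ≤ j + 1) (hi' : i' ≤ j + 1)
    (h : (j + 1 - i : ℝ) + α * ((j + 1) * j - i * (i - 1) / 2) ≤
      (j + 1 - i') + α * ((j + 1) * j - i' * (i' - 1) / 2)) :
    overlapTerm x (x ^ α) j i ≤ overlapTerm x (x ^ α) j i' := by
  have hcast : ∀ i ≤ j + 1, ((j + 1 - i : ℕ) : ℝ) = j + 1 - i ∧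
      ((2 * (j + 1).choose 2 - i.choose 2 : ℕ) : ℝ) = (j + 1) * j - i * (i - 1) / 2 := by
    intro i hi
    have := Nat.choose_le_choose 2 hi
    rw [Nat.cast_sub hi, Nat.cast_sub (by omega), Nat.cast_mul, Nat.cast_choose_two,
      Nat.cast_choose_two]
    push_cast
    constructor <;> ring
  apply pow_mul_rpow_pow_le hx
  rwa [(hcast i hi).1, (hcast i hi).2, (hcast i' hi').1, (hcast i' hi').2]

lemma overlapTerm_le_overlapTerm_two {x α : ℝ} (hx : 1 ≤ x) {j i : ℕ} (hα : -2 ≤ α * (j + 2))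
    (hi : 2 ≤ i) (hij : i ≤ j + 1) : overlapTerm x (x ^ α) j i ≤ overlapTerm x (x ^ α) j 2 := by
  refine overlapTerm_rpow_le hx hij (by omega) ?_
  have hi2 : (2 : ℝ) ≤ i := by exact_mod_cast hi
  have hij' : (i : ℝ) ≤ j + 1 := by exact_mod_cast hij
  have hpos : 0 ≤ 2 + α * (i + 1) := by
    rcases le_total 0 α with h | h
    · positivity
    · nlinarith
  push_cast
  nlinarith

lemma overlapTerm_le_overlapTerm_succ {x α : ℝ} (hx : 1 ≤ x) {j i : ℕ} (hα : α * (j + 2) ≤ -2)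
    (hi : 2 ≤ i) (hij : i ≤ j + 1) :
    overlapTerm x (x ^ α) j i ≤ overlapTerm x (x ^ α) j (j + 1) := by
  refine overlapTerm_rpow_le hx hij le_rfl ?_
  have hi2 : (2 : ℝ) ≤ i := by exact_mod_cast hi
  have hij' : (i : ℝ) ≤ j + 1 := by exact_mod_cast hij
  have hneg : 2 + α * (j + i) ≤ 0 := by
    have : α ≤ 0 := by nlinarith
    nlinarith
  push_cast
  nlinarith

lemma neg_two_le_mul_add_two {k j : ℕ} {α : ℝ} (hα : -(1 / (k : ℝ)) < α) (hj : 1 ≤ j)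
    (h : (j = 2 * k - 1 ∧ α ∈ Set.Ico (-(1 / ((k : ℝ) + 1 / 2))) (-(1 / ((k : ℝ) + 1)))) ∨
      (1 ≤ j ∧ j ≤ 2 * k - 2)) :
    -2 ≤ α * (j + 2) := by
  rcases h with ⟨rfl, hα', -⟩ | ⟨-, hjk⟩
  · rw [← neg_div, div_le_iff₀ (by positivity)] at hα'
    rw [Nat.cast_sub (by omega)]
    push_cast
    linarith
  · have hk : (0 : ℝ) < k := by exact_mod_cast (by omega : 0 < k)
    have hjk' : (j : ℝ) + 2 ≤ 2 * k := by exact_mod_cast (by omega : j + 2 ≤ 2 * k)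
    rw [← neg_div, div_lt_iff₀ hk] at hα
    rcases le_total 0 α with h | h <;> nlinarith

lemma mul_add_two_le_neg_two {k j : ℕ} {α : ℝ} (hα : α < -(1 / ((k : ℝ) + 1))) (hj : 1 ≤ j)
    (h : (j = 2 * k - 1 ∧ α ∈ Set.Ioc (-(1 / (k : ℝ))) (-(1 / ((k : ℝ) + 1 / 2)))) ∨ 2 * k ≤ j) :
    α * (j + 2) ≤ -2 := by
  rcases h with ⟨rfl, -, hα'⟩ | hjk
  · rw [← neg_div, le_div_iff₀ (by positivity)] at hα'
    rw [Nat.cast_sub (by omega)]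
    push_cast
    linarith
  · have hjk' : 2 * (k : ℝ) ≤ j := by exact_mod_cast hjk
    rw [← neg_div, lt_div_iff₀ (by positivity)] at hα
    have : α < 0 := by nlinarith
    nlinarith

theorem variance_cliqueCount_upper_bounds_general (k : ℕ) (α : ℝ)
    (hα : α ∈ Set.Ioo (-(1 / (k : ℝ))) (-(1 / ((k : ℝ) + 1))))
    (n : ℕ) (hn : 1 ≤ n) (j : ℕ) (hj : 1 ≤ j) :
    (((j = 2 * k - 1 ∧
          α ∈ Set.Ico (-(1 / ((k : ℝ) + 1 / 2))) (-(1 / ((k : ℝ) + 1)))) ∨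
        (1 ≤ j ∧ j ≤ 2 * k - 2)) →
      staticVar n ((n : ℝ) ^ α) (cliqueCountR n j) ≤
        2 ^ (j + 1) * (n : ℝ) ^ (2 * j) *
          ((n : ℝ) ^ α) ^ (2 * Nat.choose (j + 1) 2 - 1)) ∧
    (((j = 2 * k - 1 ∧
          α ∈ Set.Ioc (-(1 / (k : ℝ))) (-(1 / ((k : ℝ) + 1 / 2)))) ∨
        2 * k ≤ j) →
      staticVar n ((n : ℝ) ^ α) (cliqueCountR n j) ≤
        2 ^ (j + 1) * (n : ℝ) ^ (j + 1) *
          ((n : ℝ) ^ α) ^ (Nat.choose (j + 1) 2)) := by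
  have hn1 : (1 : ℝ) ≤ n := by exact_mod_cast hn
  have hp : 0 ≤ (n : ℝ) ^ α := rpow_nonneg (Nat.cast_nonneg n) α
  constructor
  · intro h
    have hα2 := neg_two_le_mul_add_two hα.1 hj h
    calc staticVar n ((n : ℝ) ^ α) (cliqueCountR n j)
        ≤ 2 ^ (j + 1) * n ^ (j + 1) * overlapTerm n ((n : ℝ) ^ α) j 2 :=
          staticVar_cliqueCountR_le hp (by unfold overlapTerm; positivity)
            fun i hi hij => overlapTerm_le_overlapTerm_two hn1 hα2 hi hij
      _ = _ := by
          rw [overlapTerm, Nat.choose_self, show 2 * j = j + 1 + (j + 1 - 2) by omega, pow_add]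
          ring
  · intro h
    have hα2 := mul_add_two_le_neg_two hα.2 hj h
    calc staticVar n ((n : ℝ) ^ α) (cliqueCountR n j)
        ≤ 2 ^ (j + 1) * n ^ (j + 1) * overlapTerm n ((n : ℝ) ^ α) j (j + 1) :=
          staticVar_cliqueCountR_le hp (by unfold overlapTerm; positivity)
            fun i hi hij => overlapTerm_le_overlapTerm_succ hn1 hα2 hi hij
      _ = _ := by simp [overlapTerm, two_mul]

/-- Upper bounds on the variance of the clique counts
`f_{n,j}` when `p = n^α` with `α ∈ (-1/k, -1/(k+1))`. -/
theorem variance_cliqueCount_upper_bounds (k : ℕ) (hk : 1 ≤ k) (α : ℝ)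
    (hα : α ∈ Set.Ioo (-(1 / (k : ℝ))) (-(1 / ((k : ℝ) + 1))))
    (n : ℕ) (hn : 1 ≤ n) (j : ℕ) (hj : 1 ≤ j) :
    (((j = 2 * k - 1 ∧
          α ∈ Set.Ico (-(1 / ((k : ℝ) + 1 / 2))) (-(1 / ((k : ℝ) + 1)))) ∨
        (1 ≤ j ∧ j ≤ 2 * k - 2)) →
      staticVar n ((n : ℝ) ^ α) (cliqueCountR n j) ≤
        2 ^ (j + 1) * (n : ℝ) ^ (2 * j) *
          ((n : ℝ) ^ α) ^ (2 * Nat.choose (j + 1) 2 - 1)) ∧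
    (((j = 2 * k - 1 ∧
          α ∈ Set.Ioc (-(1 / (k : ℝ))) (-(1 / ((k : ℝ) + 1 / 2)))) ∨
        2 * k ≤ j) →
      staticVar n ((n : ℝ) ^ α) (cliqueCountR n j) ≤
        2 ^ (j + 1) * (n : ℝ) ^ (j + 1) *
          ((n : ℝ) ^ α) ^ (Nat.choose (j + 1) 2)) :=
  variance_cliqueCount_upper_bounds_general k α hα n hn j hj

end
end

section
/- Fix λ > 0, k ≥ 1, n ≥ 1, p ∈ [0,1], and times 0 ≤ t₁ ≤ t₂, and write L = e^{−λ(t₂−t₁)}. Under the two-time dynamic Erdős–Rényi measure μ_{n,p}^{(t₁,t₂)}, E[ f_{n,k}(ω₁) · f_{n,k}(ω₂) ] = C(n,k+1) · Σ_{i=0}^{k+1} C(k+1,i) · C(n−k−1, k+1−i) · p^{2·C(k+1,2) − C(i,2)} · ( p + (1−p)·L )^{C(i,2)}. -/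
/-! Write each clique count as a sum of clique indicators, so that the second moment is a sum
of `E[1_A(ω₁) 1_B(ω₂)]` over pairs of `(k+1)`-sets `A, B`. Edges evolve independently, so this
factorizes over edges: an edge of both `A` and `B` must be present at both times, which has
probability `p · P(1 → 1) = p (p + (1-p) L)`; an edge of exactly one of them must be present once,
with probability `p`; other edges are unconstrained. Hence the term only depends on
`i = |A ∩ B|`, and for fixed `A` exactly `C(k+1, i) · C(n-k-1, k+1-i)` sets `B` have
`|A ∩ B| = i`. -/

open Finset MeasureTheory Filter Real

noncomputable section

open scoped Classical

section Counting

variable {α : Type*} [Fintype α] [DecidableEq α]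

theorem card_powersetCard_filter_card_inter (A : Finset α) {m i : ℕ} (hi : i ≤ m) :
    #{B ∈ powersetCard m univ | #(A ∩ B) = i} =
      (#A).choose i * (Fintype.card α - #A).choose (m - i) := by
  rw [← card_compl, ← card_powersetCard, ← card_powersetCard, ← card_product]
  refine card_nbij' (fun B => (A ∩ B, B \ A)) (fun CD => CD.1 ∪ CD.2) ?_ ?_ ?_ ?_
  · intro B hB
    simp only [coe_filter, mem_powersetCard, subset_univ, true_and, Set.mem_ofPred_eq] at hB
    have hcard := card_inter_add_card_sdiff B A
    rw [inter_comm] at hcard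
    simp only [coe_product, Set.mem_prod, mem_coe, mem_powersetCard]
    exact ⟨⟨inter_subset_left, hB.2⟩, by grind [mem_compl], by omega⟩
  · rintro ⟨C, D⟩ hCD
    simp only [coe_product, Set.mem_prod, mem_coe, mem_powersetCard] at hCD
    obtain ⟨⟨hCA, hC⟩, hDA, hD⟩ := hCD
    have hAC : A ∩ (C ∪ D) = C := by grind [mem_compl]
    simp only [coe_filter, mem_powersetCard, subset_univ, true_and, Set.mem_ofPred_eq]
    have hdisj : Disjoint C D :=
      disjoint_of_subset_left hCA (subset_compl_iff_disjoint_right.mp hDA).symm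
    rw [card_union_of_disjoint hdisj, hAC]
    omega
  · intro B _
    grind
  · rintro ⟨C, D⟩ hCD
    simp only [coe_product, Set.mem_prod, mem_coe, mem_powersetCard] at hCD
    exact Prod.ext (by grind [mem_compl]) (by grind [mem_compl])

theorem sum_powersetCard_card_inter {M : Type*} [AddCommMonoid M] (A : Finset α) (m : ℕ)
    (g : ℕ → M) :
    ∑ B ∈ powersetCard m univ, g #(A ∩ B) =
      ∑ i ∈ range (m + 1), ((#A).choose i * (Fintype.card α - #A).choose (m - i)) • g i := by
  have hmaps : ∀ B ∈ powersetCard m (univ : Finset α), #(A ∩ B) ∈ range (m + 1) := by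
    intro B hB
    have := card_le_card (inter_subset_right (s₁ := A) (s₂ := B))
    rw [(mem_powersetCard.mp hB).2] at this
    exact mem_range_succ_iff.mpr this
  rw [← sum_fiberwise_of_maps_to' hmaps]
  refine sum_congr rfl fun i hi => ?_
  rw [sum_const, card_powersetCard_filter_card_inter A (mem_range_succ_iff.mp hi)]

end Counting

section Edges

variable {n : ℕ}

def edgesWithin (A : Finset (Fin n)) : Finset (Edge n) := A.sym2.subtype fun z => ¬ z.IsDiag

theorem edgesWithin_inter (A B : Finset (Fin n)) :
    edgesWithin (A ∩ B) = edgesWithin A ∩ edgesWithin B := by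
  ext e
  simp [edgesWithin, mem_sym2_iff, forall_and]

theorem card_edgesWithin (A : Finset (Fin n)) : #(edgesWithin A) = (#A).choose 2 := by
  rw [edgesWithin, card_subtype, sym2_eq_image, Sym2.filter_image_mk_not_isDiag,
    Sym2.card_image_offDiag]

theorem card_edgesWithin_union {m : ℕ} {A B : Finset (Fin n)} (hA : #A = m) (hB : #B = m) :
    #(edgesWithin A ∪ edgesWithin B) = 2 * m.choose 2 - (#(A ∩ B)).choose 2 := by
  have := card_union_add_card_inter (edgesWithin A) (edgesWithin B)
  rw [← edgesWithin_inter, card_edgesWithin, card_edgesWithin, card_edgesWithin, hA, hB] at this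
  omega

theorem cliqueInd_eq_prod (A : Finset (Fin n)) (ω : Config n) :
    cliqueInd A ω = ∏ e ∈ edgesWithin A, if ω e then 1 else 0 := by
  simp [cliqueInd, IsCliqueOf, prod_boole, edgesWithin]

theorem cliqueCountR_eq_sum_cliqueInd (k : ℕ) (ω : Config n) :
    cliqueCountR n k ω = ∑ A ∈ powersetCard (k + 1) univ, cliqueInd A ω := by
  rw [cliqueCountR, cliqueCount, card_filter]
  push_cast
  rfl

end Edges

section Dynamic

variable (lam p : ℝ) (n : ℕ) {m : ℕ} (t : Fin m → ℝ)

theorem dynExp_sum {ι : Type*} (s : Finset ι) (F : ι → (Fin m → Config n) → ℝ) :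
    dynExp lam p n t (fun ω => ∑ i ∈ s, F i ω) = ∑ i ∈ s, dynExp lam p n t (F i) := by
  simp only [dynExp, mul_sum]
  exact sum_comm

theorem dynExp_prod (g : Edge n → (Fin m → Bool) → ℝ) :
    dynExp lam p n t (fun ω => ∏ e, g e (fun i => ω i e)) =
      ∏ e, ∑ q, pathWeight lam p t q * g e q := by
  simp only [dynExp, dynWeight, ← prod_mul_distrib]
  rw [Fintype.prod_sum]
  exact Fintype.sum_equiv (Equiv.piComm _) _ _ fun _ => rfl

theorem pathWeight_two (t₁ t₂ : ℝ) (b : Fin 2 → Bool) :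
    pathWeight lam p ![t₁, t₂] b = bern p (b 0) * transP lam p (t₂ - t₁) (b 0) (b 1) := by
  simp [pathWeight, Fin.prod_univ_two]

theorem sum_pathWeight_two_mul_ite (t₁ t₂ : ℝ) (a c : Prop) [Decidable a] [Decidable c] :
    ∑ q : Fin 2 → Bool, pathWeight lam p ![t₁, t₂] q *
        ((if a then (if q 0 then 1 else 0) else 1) * (if c then (if q 1 then 1 else 0) else 1)) =
      (if a ∨ c then p else 1) * (if a ∧ c then transP lam p (t₂ - t₁) true true else 1) := by
  rw [← (finTwoArrowEquiv Bool).symm.sum_comp, Fintype.sum_prod_type]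
  by_cases ha : a <;> by_cases hc : c <;>
    simp [ha, hc, pathWeight_two, bern, transP] <;> ring

theorem dynExp_cliqueInd_mul_cliqueInd (t₁ t₂ : ℝ) (A B : Finset (Fin n)) :
    dynExp lam p n ![t₁, t₂] (fun ω => cliqueInd A (ω 0) * cliqueInd B (ω 1)) =
      p ^ #(edgesWithin A ∪ edgesWithin B) *
        transP lam p (t₂ - t₁) true true ^ #(edgesWithin (A ∩ B)) := by
  set g : Edge n → (Fin 2 → Bool) → ℝ := fun e q =>
    (if e ∈ edgesWithin A then (if q 0 then 1 else 0) else 1) *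
      (if e ∈ edgesWithin B then (if q 1 then 1 else 0) else 1)
  have hfactor : ∀ ω : Fin 2 → Config n,
      cliqueInd A (ω 0) * cliqueInd B (ω 1) = ∏ e, g e (fun i => ω i e) := by
    intro ω
    rw [prod_mul_distrib, Fintype.prod_ite_mem, Fintype.prod_ite_mem, cliqueInd_eq_prod,
      cliqueInd_eq_prod]
  simp_rw [hfactor]
  rw [dynExp_prod, edgesWithin_inter]
  simp only [g, sum_pathWeight_two_mul_ite, prod_mul_distrib, ← mem_union, ← mem_inter,
    Fintype.prod_ite_mem, prod_const]

end Dynamic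

theorem dynamic_second_moment_cliqueCount_general (lam : ℝ) (k : ℕ) (n : ℕ) (p : ℝ) (t₁ t₂ : ℝ) :
    dynExp lam p n ![t₁, t₂]
        (fun ω => cliqueCountR n k (ω 0) * cliqueCountR n k (ω 1)) =
      (Nat.choose n (k + 1) : ℝ) *
        ∑ i ∈ Finset.range (k + 2),
          (Nat.choose (k + 1) i : ℝ) * (Nat.choose (n - k - 1) (k + 1 - i) : ℝ) *
            p ^ (2 * Nat.choose (k + 1) 2 - Nat.choose i 2) *
            (p + (1 - p) * Real.exp (-lam * (t₂ - t₁))) ^ (Nat.choose i 2) := by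
  set P := powersetCard (k + 1) (univ : Finset (Fin n))
  set g : ℕ → ℝ := fun i =>
    p ^ (2 * (k + 1).choose 2 - i.choose 2) * transP lam p (t₂ - t₁) true true ^ i.choose 2
  have hpair : ∀ A ∈ P, ∀ B ∈ P,
      dynExp lam p n ![t₁, t₂] (fun ω => cliqueInd A (ω 0) * cliqueInd B (ω 1)) = g #(A ∩ B) := by
    intro A hA B hB
    rw [dynExp_cliqueInd_mul_cliqueInd, card_edgesWithin_union (mem_powersetCard.mp hA).2
      (mem_powersetCard.mp hB).2, card_edgesWithin]
  calc _ = ∑ A ∈ P, ∑ B ∈ P,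
        dynExp lam p n ![t₁, t₂] (fun ω => cliqueInd A (ω 0) * cliqueInd B (ω 1)) := by
        simp only [cliqueCountR_eq_sum_cliqueInd, sum_mul_sum, dynExp_sum, P]
    _ = ∑ A ∈ P, ∑ B ∈ P, g #(A ∩ B) :=
        sum_congr rfl fun A hA => sum_congr rfl fun B hB => hpair A hA B hB
    _ = ∑ A ∈ P, ∑ i ∈ range (k + 2),
          ((k + 1).choose i * (n - (k + 1)).choose (k + 1 - i)) • g i :=
        sum_congr rfl fun A hA => by
          rw [sum_powersetCard_card_inter, (mem_powersetCard.mp hA).2, Fintype.card_fin]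
    _ = _ := by
        rw [sum_const, card_powersetCard, card_univ, Fintype.card_fin, Nat.sub_sub]
        simp [g, transP, mul_sum, mul_assoc]

/-- Exact formula for the two-time second moment of the clique
count under the dynamic Erdős–Rényi measure. -/
theorem dynamic_second_moment_cliqueCount (lam : ℝ) (hlam : 0 < lam)
    (k : ℕ) (hk : 1 ≤ k) (n : ℕ) (hn : 1 ≤ n) (p : ℝ)
    (hp : p ∈ Set.Icc (0 : ℝ) 1) (t₁ t₂ : ℝ) (ht₁ : 0 ≤ t₁) (ht : t₁ ≤ t₂) :
    dynExp lam p n ![t₁, t₂]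
        (fun ω => cliqueCountR n k (ω 0) * cliqueCountR n k (ω 1)) =
      (Nat.choose n (k + 1) : ℝ) *
        ∑ i ∈ Finset.range (k + 2),
          (Nat.choose (k + 1) i : ℝ) * (Nat.choose (n - k - 1) (k + 1 - i) : ℝ) *
            p ^ (2 * Nat.choose (k + 1) 2 - Nat.choose i 2) *
            (p + (1 - p) * Real.exp (-lam * (t₂ - t₁))) ^ (Nat.choose i 2) :=
  dynamic_second_moment_cliqueCount_general lam k n p t₁ t₂

end
end
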